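/- (Theorem 2, ball carving partitions.) There is a universal constant C > 0 such that the following holds. Let (𝒟,h) be a separable binary classification task on ℝ^d (d ≥ 1) with supp(𝒟) bounded, let f be a measurable classifier, let ε > 0 and β > 1, and let g_Π be the smoothed classifier obtained from the ball carving partition Π of supp(𝒟) with parameter εβ. Then 𝔼_{R,σ}[AR(g_Π, ε)] ≤ 2·S(εβ) + 2·R(f) + C·d/β; moreover, if AR(ε) > 0 then 𝔼_{R,σ}[AR(g_Π, ε)] ≤ (2·S(εβ)/S(2ε))·AR(ε) + 2·R(f) + C·d/β. -/

import Mathlib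

/-!
A point of the support is attacked successfully at radius `ε` only if its `ε`-ball is cut by the
carving, or the ball lies in a single block whose majority vote of `f` is wrong at the point.
A block has diameter `< 2R ≤ εβ`, so if `E` separates the two classes by `εβ`, all points of a
block outside `E` carry the same label; the wrong-majority points of the block then cost at most
twice the mass of the block in `E ∪ {f ≠ h}`, which sums to `2 𝒟(E) + 2 risk(f)` over the blocks.
For a fixed `x`, the ball around `u j` cuts `ball x ε` only if `R` falls within `ε` of
`dist x (u j)` (probability `≤ 8/β`) and `u j` comes first in `σ` among the centers at least as
close to `x` (probability `≤ 1/rank`). At most `13^d` centers are that close, so the expected number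
of cuts is at most `(8/β) H_{13^d} ≤ 104 d/β`. The second bound follows from `S(2ε) ≤ AR(ε)`:
removing the points attacked by any classifier separates the classes by `2ε`.
-/

open MeasureTheory Metric Set
open scoped ENNReal NNReal

noncomputable section

/-- The Euclidean space `ℝ^d` with the `ℓ₂` metric. -/
abbrev Euc (d : ℕ) := EuclideanSpace ℝ (Fin d)

/-- A (binary) classifier: a measurable function with values in `{-1, 1}`. -/
def IsClassifier {d : ℕ} (f : Euc d → ℝ) : Prop :=
  Measurable f ∧ ∀ x, f x = 1 ∨ f x = -1

/-- The (standard) risk `R(f) = ℙ_{X ∼ 𝒟}(f(X) ≠ h(X))` of a classifier `f`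
with respect to the data distribution `𝒟` and the ground truth `h`. -/
def risk {d : ℕ} (𝒟 : Measure (Euc d)) (h f : Euc d → ℝ) : ℝ≥0∞ :=
  𝒟 {x | f x ≠ h x}

/-- The adversarial risk
`AR(f,ε) = ℙ_{X ∼ 𝒟}(∃ η, ‖η‖₂ < ε ∧ f(X+η) ≠ h(X))`. -/
def advRisk {d : ℕ} (𝒟 : Measure (Euc d)) (h f : Euc d → ℝ) (ε : ℝ) : ℝ≥0∞ :=
  𝒟 {x | ∃ η : Euc d, ‖η‖ < ε ∧ f (x + η) ≠ h x}

/-- `AR(ε)`: the infimum of the adversarial risk over all measurable classifiers. -/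
def optAdvRisk {d : ℕ} (𝒟 : Measure (Euc d)) (h : Euc d → ℝ) (ε : ℝ) : ℝ≥0∞ :=
  ⨅ (f : Euc d → ℝ) (_ : IsClassifier f), advRisk 𝒟 h f ε

/-- The `ℓ₂` distance between two sets, as an extended nonnegative real
(`∞` if one of the sets is empty). -/
def setEDist {d : ℕ} (A B : Set (Euc d)) : ℝ≥0∞ :=
  ⨅ a ∈ A, ⨅ b ∈ B, edist a b

/-- The separation function `S(ε)`: the infimum, over measurable sets `E` whose
removal separates the two classes `M₋ = h⁻¹({-1})` and `M₊ = h⁻¹({1})` by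
distance at least `ε`, of the probability mass of `E`. -/
def sep {d : ℕ} (𝒟 : Measure (Euc d)) (h : Euc d → ℝ) (ε : ℝ) : ℝ≥0∞ :=
  ⨅ (E : Set (Euc d)) (_ : MeasurableSet E)
    (_ : ENNReal.ofReal ε ≤ setEDist (h ⁻¹' {-1} \ E) (h ⁻¹' {1} \ E)), 𝒟 E

/-- The support of a Borel measure on `ℝ^d`: the set of points all of whose
neighborhoods have positive mass. -/
def msupport {d : ℕ} (𝒟 : Measure (Euc d)) : Set (Euc d) :=
  {x | ∀ r : ℝ, 0 < r → 0 < 𝒟 (ball x r)}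

/-- `sgn t = 1` if `t ≥ 0` and `sgn t = -1` otherwise. -/
def sgn (t : ℝ) : ℝ := if 0 ≤ t then 1 else -1

/-- `sgn (𝔼_{Z ∼ 𝒟}[f(Z) ∣ Z ∈ A])`: the sign of the conditional expectation of
`f` under `𝒟` given the block `A`. -/
def smoothVal {d : ℕ} (𝒟 : Measure (Euc d)) (f : Euc d → ℝ) (A : Set (Euc d)) : ℝ :=
  sgn ((∫ z in A, f z ∂𝒟) / (𝒟 A).toReal)

/-- The block `Π̂(uᵢ) = B_R(uᵢ) \\ ⋃_{j : σ(j) < σ(i)} B_R(uⱼ)` of the ball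
carving partition built from the net `u`, radius `R` and order `σ`. -/
def carvBlock {d n : ℕ} (u : Fin n → Euc d) (R : ℝ) (σ : Equiv.Perm (Fin n))
    (i : Fin n) : Set (Euc d) :=
  ball (u i) R \ ⋃ j ∈ {j | σ j < σ i}, ball (u j) R

/-- The uniform probability measure on the interval `Ioc a b`. -/
def unifIoc (a b : ℝ) : Measure ℝ :=
  (volume (Set.Ioc a b))⁻¹ • volume.restrict (Set.Ioc a b)

instance (n : ℕ) : MeasurableSpace (Equiv.Perm (Fin n)) := ⊤

/-- The uniform probability measure on permutations of `Fin n` (a uniformly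
random linear order of the net). -/
def unifPerm (n : ℕ) : Measure (Equiv.Perm (Fin n)) :=
  (Measure.count (Set.univ : Set (Equiv.Perm (Fin n))))⁻¹ • Measure.count

/-- The joint distribution of the randomness `(R, σ)` of the ball carving
partition with parameter `ε`: `R` uniform on `(ε/4, ε/2]` and `σ` a uniformly
random order, independent. -/
def carvMeasure (ε : ℝ) (n : ℕ) : Measure (ℝ × Equiv.Perm (Fin n)) :=
  (unifIoc (ε / 4) (ε / 2)).prod (unifPerm n)

open scoped Finset

lemma unifPerm_eq_uniformOn (n : ℕ) : unifPerm n = ProbabilityTheory.uniformOn univ := by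
  rw [unifPerm, ProbabilityTheory.uniformOn, ProbabilityTheory.cond, Measure.restrict_univ]

lemma measure_compl_msupport {d : ℕ} (𝒟 : Measure (Euc d)) : 𝒟 (msupport 𝒟)ᶜ = 0 := by
  have hnull : ∀ y : ↥(msupport 𝒟)ᶜ, ∃ r : ℝ, 0 < r ∧ 𝒟 (ball (y : Euc d) r) = 0 := by
    rintro ⟨y, hy⟩
    simpa [msupport] using hy
  choose r hr h0 using hnull
  obtain ⟨T, hTc, hT⟩ := TopologicalSpace.isOpen_iUnion_countable
    (fun y : ↥(msupport 𝒟)ᶜ => ball (y : Euc d) (r y)) fun _ => isOpen_ball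
  refine measure_mono_null (fun x hx => ?_) ((measure_biUnion_null_iff hTc).2 fun y _ => h0 y)
  rw [hT]
  exact mem_iUnion.2 ⟨⟨x, hx⟩, mem_ball_self (hr ⟨x, hx⟩)⟩

lemma ofReal_le_setEDist_iff {d : ℕ} {A B : Set (Euc d)} {δ : ℝ} :
    ENNReal.ofReal δ ≤ setEDist A B ↔ ∀ a ∈ A, ∀ b ∈ B, δ ≤ dist a b := by
  simp [setEDist, le_iInf_iff, edist_dist, ENNReal.ofReal_le_ofReal_iff dist_nonneg]

lemma sep_le_of_le_setEDist {d : ℕ} (𝒟 : Measure (Euc d)) (h : Euc d → ℝ) {δ : ℝ}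
    (s : Set (Euc d)) (hs : ENNReal.ofReal δ ≤ setEDist (h ⁻¹' {-1} \ s) (h ⁻¹' {1} \ s)) :
    sep 𝒟 h δ ≤ 𝒟 s := by
  have hsub : ENNReal.ofReal δ ≤
      setEDist (h ⁻¹' {-1} \ toMeasurable 𝒟 s) (h ⁻¹' {1} \ toMeasurable 𝒟 s) := by
    rw [ofReal_le_setEDist_iff] at hs ⊢
    exact fun a ha b hb => hs a ⟨ha.1, fun h => ha.2 (subset_toMeasurable 𝒟 s h)⟩
      b ⟨hb.1, fun h => hb.2 (subset_toMeasurable 𝒟 s h)⟩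
  rw [← measure_toMeasurable s]
  exact iInf₂_le_of_le _ (measurableSet_toMeasurable 𝒟 s) (iInf_le _ hsub)

lemma sep_ne_top {d : ℕ} (𝒟 : Measure (Euc d)) [IsFiniteMeasure 𝒟] (h : Euc d → ℝ) (δ : ℝ) :
    sep 𝒟 h δ ≠ ⊤ :=
  ne_top_of_le_ne_top (measure_ne_top 𝒟 univ) (sep_le_of_le_setEDist 𝒟 h univ (by simp [setEDist]))

lemma sep_two_mul_le_advRisk {d : ℕ} (𝒟 : Measure (Euc d)) (h f : Euc d → ℝ) (ε : ℝ) :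
    sep 𝒟 h (2 * ε) ≤ advRisk 𝒟 h f ε := by
  refine sep_le_of_le_setEDist 𝒟 h _ (ofReal_le_setEDist_iff.2 fun a ha b hb => ?_)
  by_contra! hab
  have hfa : f (a + (2⁻¹ : ℝ) • (b - a)) = h a := by
    by_contra hne
    refine ha.2 ⟨_, ?_, hne⟩
    rw [norm_smul, ← dist_eq_norm', Real.norm_of_nonneg (by norm_num)]
    linarith
  have hfb : f (b + (2⁻¹ : ℝ) • (a - b)) = h b := by
    by_contra hne
    refine hb.2 ⟨_, ?_, hne⟩
    rw [norm_smul, ← dist_eq_norm, Real.norm_of_nonneg (by norm_num)]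
    linarith
  have hmid : a + (2⁻¹ : ℝ) • (b - a) = b + (2⁻¹ : ℝ) • (a - b) := by module
  have : (-1 : ℝ) = 1 := by rw [← ha.1, ← hfa, hmid, hfb, hb.1]
  norm_num at this

lemma sep_two_mul_le_optAdvRisk {d : ℕ} (𝒟 : Measure (Euc d)) (h : Euc d → ℝ) (ε : ℝ) :
    sep 𝒟 h (2 * ε) ≤ optAdvRisk 𝒟 h ε :=
  le_iInf₂ fun f _ => sep_two_mul_le_advRisk 𝒟 h f ε

lemma ENNReal.le_div_mul_of_le {a b c : ℝ≥0∞} (hbc : b ≤ c) (hb : b ≠ ⊤) (hc : c ≠ 0) :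
    a ≤ a / b * c := by
  rcases eq_or_ne a 0 with rfl | ha
  · exact zero_le
  rcases eq_or_ne b 0 with rfl | hb0
  · simp [ENNReal.div_zero ha, ENNReal.top_mul hc]
  calc a = a / b * b := (ENNReal.div_mul_cancel hb0 hb).symm
    _ ≤ a / b * c := by gcongr

lemma unifIoc_apply (a b : ℝ) (s : Set ℝ) :
    unifIoc a b s = (volume (Ioc a b))⁻¹ * volume (s ∩ Ioc a b) := by
  rw [unifIoc, Measure.smul_apply, Measure.restrict_apply' measurableSet_Ioc, smul_eq_mul]

lemma isProbabilityMeasure_unifIoc {a b : ℝ} (hab : a < b) :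
    IsProbabilityMeasure (unifIoc a b) :=
  ⟨by rw [unifIoc_apply, univ_inter, ENNReal.inv_mul_cancel (by simp [hab]) (by simp)]⟩

lemma unifIoc_Ioo_le {a b : ℝ} (hab : a < b) (c e : ℝ) :
    unifIoc a b (Ioo c e) ≤ ENNReal.ofReal ((e - c) / (b - a)) := by
  rw [unifIoc_apply, Real.volume_Ioc, ENNReal.ofReal_div_of_pos (sub_pos.2 hab), div_eq_mul_inv,
    mul_comm]
  gcongr
  exact (measure_mono inter_subset_left).trans_eq Real.volume_Ioo

lemma unifIoc_Ioo_eq_zero {a b c : ℝ} (hbc : b ≤ c) (e : ℝ) : unifIoc a b (Ioo c e) = 0 := by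
  have : Ioo c e ∩ Ioc a b = ∅ :=
    eq_empty_of_forall_notMem fun y hy => (hy.1.1.trans_le hy.2.2).not_ge hbc
  rw [unifIoc_apply, this, measure_empty, mul_zero]

lemma card_filter_isLeast_mul_card_le {α : Type*} [Fintype α] [DecidableEq α] [LinearOrder α]
    (S : Finset α) (j : α) :
    #{σ : Equiv.Perm α | ∀ k ∈ S, k ≠ j → σ j < σ k} * #S ≤ Fintype.card (Equiv.Perm α) := by
  set F : α → Finset (Equiv.Perm α) := fun j => {σ | ∀ k ∈ S, k ≠ j → σ j < σ k}
  have hcard : ∀ k ∈ S, #(F j) ≤ #(F k) := by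
    intro k hk
    rcases eq_or_ne k j with rfl | hkj
    · exact le_rfl
    -- swapping the values at `j` and `k` moves the minimum from `j` to `k`
    refine Finset.card_le_card_of_injOn (fun σ => σ * Equiv.swap j k) (fun σ hσ => ?_)
      fun σ₁ _ σ₂ _ h => mul_right_cancel h
    simp only [F, Finset.coe_filter, Finset.mem_univ, true_and, mem_ofPred_eq] at hσ ⊢
    intro m hm hmk
    simp only [Equiv.Perm.mul_apply, Equiv.swap_apply_right]
    rcases eq_or_ne m j with rfl | hmj
    · simpa using hσ k hk hkj
    · rw [Equiv.swap_apply_of_ne_of_ne hmj hmk]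
      exact hσ m hm hmj
  have hdisj : (S : Set α).PairwiseDisjoint F := fun k₁ h₁ k₂ h₂ hne =>
    Finset.disjoint_left.2 fun σ hσ₁ hσ₂ => by
      simp only [F, Finset.mem_filter, Finset.mem_univ, true_and] at hσ₁ hσ₂
      exact (hσ₁ k₂ h₂ hne.symm).not_gt (hσ₂ k₁ h₁ hne)
  calc #(F j) * #S = ∑ _k ∈ S, #(F j) := by rw [Finset.sum_const, smul_eq_mul, mul_comm]
    _ ≤ ∑ k ∈ S, #(F k) := Finset.sum_le_sum hcard
    _ = #(S.biUnion F) := (Finset.card_biUnion hdisj).symm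
    _ ≤ Fintype.card (Equiv.Perm α) := Finset.card_le_univ _

lemma unifPerm_isLeast_le {n : ℕ} (S : Finset (Fin n)) (j : Fin n) :
    unifPerm n {σ | ∀ k ∈ S, k ≠ j → σ j < σ k} ≤ (#S : ℝ≥0∞)⁻¹ := by
  rw [unifPerm_eq_uniformOn, ProbabilityTheory.uniformOn_univ,
    ← Finset.coe_filter_univ, Measure.count_apply_finset, ENNReal.le_inv_iff_mul_le,
    div_eq_mul_inv, mul_right_comm, ← div_eq_mul_inv, ENNReal.div_le_iff (by simp) (by simp),
    one_mul]
  exact_mod_cast card_filter_isLeast_mul_card_le S j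

lemma sum_inv_card_filter_le_harmonic {ι : Type*} [DecidableEq ι] (S : Finset ι) (v : ι → ℝ) :
    ∑ j ∈ S, (#{k ∈ S | v k ≤ v j} : ℝ)⁻¹ ≤ harmonic #S := by
  induction S using Finset.induction_on_max_value v with
  | empty => simp
  | insert a S ha hmax ih =>
    have hlast : #{k ∈ insert a S | v k ≤ v a} = #S + 1 := by
      rw [Finset.filter_true_of_mem fun k hk => ?_, Finset.card_insert_of_notMem ha]
      rcases Finset.mem_insert.1 hk with rfl | hk
      exacts [le_rfl, hmax k hk]
    have hrest : ∀ j ∈ S, (#{k ∈ insert a S | v k ≤ v j} : ℝ)⁻¹ ≤ (#{k ∈ S | v k ≤ v j} : ℝ)⁻¹ :=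
      fun j hj => inv_anti₀ (by exact_mod_cast Finset.card_pos.2 ⟨j, by simpa using hj⟩)
        (Nat.cast_le.2 (Finset.card_le_card
          (Finset.filter_subset_filter _ (Finset.subset_insert a S))))
    rw [Finset.sum_insert ha, hlast, Finset.card_insert_of_notMem ha, harmonic_succ]
    push_cast
    linarith [Finset.sum_le_sum hrest]

lemma harmonic_le_mul_of_le_pow {b d M : ℕ} (hd : 1 ≤ d) (hM : M ≤ b ^ d) :
    (harmonic M : ℝ) ≤ b * d := by
  rcases Nat.eq_zero_or_pos M with rfl | hM0
  · simp only [harmonic_zero, Rat.cast_zero]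
    positivity
  have hb : (0 : ℝ) < b := by
    exact_mod_cast Nat.pos_of_ne_zero fun hb => by
      rw [hb, zero_pow (by omega)] at hM
      omega
  have hd' : (1 : ℝ) ≤ d := by exact_mod_cast hd
  calc (harmonic M : ℝ) ≤ 1 + Real.log M := harmonic_le_one_add_log M
    _ ≤ 1 + Real.log ((b : ℝ) ^ d) := by gcongr; exact_mod_cast hM
    _ = 1 + d * Real.log b := by rw [Real.log_pow]
    _ ≤ 1 + d * (b - 1) := by gcongr; exact Real.log_le_sub_one_of_pos hb
    _ ≤ b * d := by nlinarith

/-- The disjoint balls of radius `s / 2` around the points of `T` fit into `ball x (ρ + s / 2)`. -/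
lemma card_le_of_isSeparated {E ι : Type*} [NormedAddCommGroup E] [NormedSpace ℝ E]
    [MeasurableSpace E] [BorelSpace E] [FiniteDimensional ℝ E] [Nontrivial E]
    {u : ι → E} {s ρ : ℝ} (hs : 0 < s) (hρ : 0 ≤ ρ) (T : Finset ι)
    (hsep : ∀ i ∈ T, ∀ j ∈ T, i ≠ j → s ≤ dist (u i) (u j)) {x : E}
    (hT : ∀ i ∈ T, dist x (u i) < ρ) :
    (#T : ℝ) ≤ ((2 * ρ + s) / s) ^ Module.finrank ℝ E := by
  set μ : Measure E := Measure.addHaar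
  have hdisj : (T : Set ι).PairwiseDisjoint fun j => ball (u j) (s / 2) :=
    fun i hi j hj hij => ball_disjoint_ball (by linarith [hsep i hi j hj hij])
  have hsub : (⋃ j ∈ T, ball (u j) (s / 2)) ⊆ ball x (ρ + s / 2) := by
    refine iUnion₂_subset fun j hj y hy => ?_
    rw [mem_ball] at hy ⊢
    linarith [dist_triangle y (u j) x, dist_comm x (u j), hT j hj]
  have hvol : (#T : ℝ≥0∞) * ENNReal.ofReal ((s / 2) ^ Module.finrank ℝ E) * μ (ball 0 1) ≤
      ENNReal.ofReal ((ρ + s / 2) ^ Module.finrank ℝ E) * μ (ball 0 1) := by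
    calc (#T : ℝ≥0∞) * ENNReal.ofReal ((s / 2) ^ Module.finrank ℝ E) * μ (ball 0 1)
        = ∑ j ∈ T, μ (ball (u j) (s / 2)) := by
          simp [μ, Measure.addHaar_ball _ _ (half_pos hs).le, mul_assoc]
      _ = μ (⋃ j ∈ T, ball (u j) (s / 2)) :=
          (measure_biUnion_finset hdisj fun _ _ => measurableSet_ball).symm
      _ ≤ μ (ball x (ρ + s / 2)) := measure_mono hsub
      _ = ENNReal.ofReal ((ρ + s / 2) ^ Module.finrank ℝ E) * μ (ball 0 1) :=
          Measure.addHaar_ball _ _ (by positivity)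
  rw [ENNReal.mul_le_mul_iff_left (measure_ball_pos μ _ one_pos).ne' measure_ball_lt_top.ne,
    ← ENNReal.ofReal_natCast, ← ENNReal.ofReal_mul (by positivity),
    ENNReal.ofReal_le_ofReal_iff (by positivity)] at hvol
  rw [show (2 * ρ + s) / s = (ρ + s / 2) / (s / 2) by field_simp, div_pow,
    le_div_iff₀ (by positivity)]
  exact hvol

lemma mul_nonpos_of_sgn_ne {t v : ℝ} (hv : v = 1 ∨ v = -1) (ht : sgn t ≠ v) : v * t ≤ 0 := by
  unfold sgn at ht
  rcases hv with rfl | rfl <;> split_ifs at ht <;> first | exact absurd rfl ht | linarith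

lemma mul_setIntegral_classifier {d : ℕ} (𝒟 : Measure (Euc d)) [IsFiniteMeasure 𝒟]
    {f : Euc d → ℝ} (hf : IsClassifier f) {A : Set (Euc d)} (hA : MeasurableSet A) {v : ℝ}
    (hv : v = 1 ∨ v = -1) :
    v * ∫ z in A, f z ∂𝒟 = 𝒟.real (A ∩ f ⁻¹' {v}) - 𝒟.real (A \ f ⁻¹' {v}) := by
  have hS : MeasurableSet (f ⁻¹' {v}) := hf.1 (measurableSet_singleton v)
  have hint : IntegrableOn (fun z => v * f z) A 𝒟 :=
    (integrable_const 1).mono' (hf.1.const_mul v).aestronglyMeasurable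
      (ae_of_all _ fun z => by rcases hv with rfl | rfl <;> rcases hf.2 z with h | h <;> simp [h])
  rw [← integral_const_mul, ← integral_inter_add_sdiff hS hint,
    setIntegral_congr_fun (hA.inter hS) (g := fun _ => 1) fun z hz => ?_,
    setIntegral_congr_fun (hA.diff hS) (g := fun _ => -1) fun z hz => ?_]
  · simp [sub_eq_add_neg]
  · rcases hv with rfl | rfl <;> rcases hf.2 z with h | h <;> simp_all
  · rcases hv with rfl | rfl <;> simp_all

lemma measure_le_two_mul_of_smoothVal_ne {d : ℕ} (𝒟 : Measure (Euc d)) [IsFiniteMeasure 𝒟]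
    {f : Euc d → ℝ} (hf : IsClassifier f) {A : Set (Euc d)} (hA : MeasurableSet A) {v : ℝ}
    (hv : v = 1 ∨ v = -1) (hne : smoothVal 𝒟 f A ≠ v) : 𝒟 A ≤ 2 * 𝒟 (A \ f ⁻¹' {v}) := by
  rcases eq_or_ne (𝒟 A) 0 with hA0 | hA0
  · simp [hA0]
  have hpos : 0 < 𝒟.real A := ENNReal.toReal_pos hA0 (measure_ne_top 𝒟 A)
  have hvote : v * ∫ z in A, f z ∂𝒟 ≤ 0 := by
    have := mul_nonpos_of_sgn_ne hv hne
    rw [mul_div_assoc'] at this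
    exact (div_nonpos_iff.1 this).elim (fun h => absurd h.2 hpos.not_ge) fun h => h.1
  rw [mul_setIntegral_classifier 𝒟 hf hA hv, sub_nonpos, measureReal_def, measureReal_def,
    ENNReal.toReal_le_toReal (measure_ne_top _ _) (measure_ne_top _ _)] at hvote
  calc 𝒟 A = 𝒟 (A ∩ f ⁻¹' {v}) + 𝒟 (A \ f ⁻¹' {v}) :=
        (measure_inter_add_sdiff A (hf.1 (measurableSet_singleton v))).symm
    _ ≤ 2 * 𝒟 (A \ f ⁻¹' {v}) := by rw [two_mul]; gcongr

lemma measure_smoothVal_ne_le {d : ℕ} (𝒟 : Measure (Euc d)) [IsFiniteMeasure 𝒟]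
    {h f : Euc d → ℝ} (hf : IsClassifier f) {A : Set (Euc d)} (hA : MeasurableSet A)
    (E : Set (Euc d)) {v : ℝ} (hv : v = 1 ∨ v = -1) (hAE : ∀ y ∈ A \ E, h y = v) :
    𝒟 (A ∩ {y | smoothVal 𝒟 f A ≠ h y}) ≤ 2 * 𝒟 (A ∩ E) + 2 * 𝒟 (A ∩ {y | f y ≠ h y}) := by
  by_cases hvote : smoothVal 𝒟 f A = v
  · calc 𝒟 (A ∩ {y | smoothVal 𝒟 f A ≠ h y}) ≤ 𝒟 (A ∩ E) :=
          measure_mono fun y hy =>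
            ⟨hy.1, by_contra fun hyE => hy.2 (hvote.trans (hAE y ⟨hy.1, hyE⟩).symm)⟩
      _ ≤ 2 * 𝒟 (A ∩ E) + 2 * 𝒟 (A ∩ {y | f y ≠ h y}) := by
          rw [two_mul, add_assoc]; exact le_self_add
  · have hsub : A \ f ⁻¹' {v} ⊆ (A ∩ E) ∪ (A ∩ {y | f y ≠ h y}) := fun y hy => by
      by_cases hyE : y ∈ E
      · exact Or.inl ⟨hy.1, hyE⟩
      · exact Or.inr ⟨hy.1, by rw [mem_ofPred_eq, hAE y ⟨hy.1, hyE⟩]; exact hy.2⟩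
    calc 𝒟 (A ∩ {y | smoothVal 𝒟 f A ≠ h y}) ≤ 𝒟 A := measure_mono inter_subset_left
      _ ≤ 2 * 𝒟 (A \ f ⁻¹' {v}) := measure_le_two_mul_of_smoothVal_ne 𝒟 hf hA hv hvote
      _ ≤ 2 * (𝒟 (A ∩ E) + 𝒟 (A ∩ {y | f y ≠ h y})) := by
          gcongr; exact (measure_mono hsub).trans (measure_union_le _ _)
      _ = 2 * 𝒟 (A ∩ E) + 2 * 𝒟 (A ∩ {y | f y ≠ h y}) := mul_add _ _ _

lemma eq_of_dist_lt_of_le_setEDist {d : ℕ} {h : Euc d → ℝ} (hh : ∀ x, h x = 1 ∨ h x = -1)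
    {E : Set (Euc d)} {δ : ℝ} (hE : ENNReal.ofReal δ ≤ setEDist (h ⁻¹' {-1} \ E) (h ⁻¹' {1} \ E))
    {y z : Euc d} (hy : y ∉ E) (hz : z ∉ E) (hyz : dist y z < δ) : h y = h z := by
  rw [ofReal_le_setEDist_iff] at hE
  rcases hh y with hy1 | hy1 <;> rcases hh z with hz1 | hz1
  · rw [hy1, hz1]
  · exact absurd (hE z ⟨hz1, hz⟩ y ⟨hy1, hy⟩) (by rw [dist_comm]; exact hyz.not_ge)
  · exact absurd (hE y ⟨hy1, hy⟩ z ⟨hz1, hz⟩) hyz.not_ge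
  · rw [hy1, hz1]

lemma exists_eq_on_sdiff_of_le_setEDist {d : ℕ} {h : Euc d → ℝ}
    (hh : ∀ x, h x = 1 ∨ h x = -1) {E : Set (Euc d)} {δ : ℝ}
    (hE : ENNReal.ofReal δ ≤ setEDist (h ⁻¹' {-1} \ E) (h ⁻¹' {1} \ E)) {A : Set (Euc d)}
    (hA : ∀ y ∈ A, ∀ z ∈ A, dist y z < δ) : ∃ v, (v = 1 ∨ v = -1) ∧ ∀ y ∈ A \ E, h y = v := by
  rcases (A \ E).eq_empty_or_nonempty with hempty | ⟨y₀, hy₀⟩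
  · exact ⟨1, Or.inl rfl, fun y hy => by simp [hempty] at hy⟩
  · exact ⟨h y₀, hh y₀, fun y hy =>
      eq_of_dist_lt_of_le_setEDist hh hE hy.2 hy₀.2 (hA y hy.1 y₀ hy₀.1)⟩

section Carving

variable {d n : ℕ} (u : Fin n → Euc d) (R : ℝ) (σ : Equiv.Perm (Fin n))

lemma measurableSet_carvBlock (i : Fin n) : MeasurableSet (carvBlock u R σ i) :=
  measurableSet_ball.diff (.biUnion (to_countable _) fun _ _ => measurableSet_ball)

lemma pairwise_disjoint_carvBlock : Pairwise (Function.onFun Disjoint (carvBlock u R σ)) := by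
  intro i j hij
  rw [Function.onFun, disjoint_left]
  intro x hxi hxj
  rcases lt_or_gt_of_ne (σ.injective.ne hij) with hlt | hlt
  · exact hxj.2 (mem_biUnion (show i ∈ {k | σ k < σ j} from hlt) hxi.1)
  · exact hxi.2 (mem_biUnion (show j ∈ {k | σ k < σ i} from hlt) hxj.1)

/-- `ball x ε` meets the sphere of radius `R` around `u j`, the first center in the order `σ`
among those at least as close to `x`. -/
def IsCut (ε : ℝ) (x : Euc d) (j : Fin n) : Prop :=
  dist x (u j) ∈ Ioo (R - ε) (R + ε) ∧ ∀ k, dist x (u k) ≤ dist x (u j) → k ≠ j → σ j < σ k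

/-- Let `j` be the `σ`-first center within `R + ε` of `x`: either the ball around `u j`
swallows `ball x ε`, or it cuts it. -/
lemma ball_subset_carvBlock_or_isCut {ε : ℝ} {x : Euc d} (hx : ∃ i, dist x (u i) < R + ε) :
    (∃ i, ball x ε ⊆ carvBlock u R σ i) ∨ ∃ j, IsCut u R σ ε x j := by
  classical
  obtain ⟨j, hjW, hjmin⟩ := Finset.exists_min_image {k | dist x (u k) < R + ε} σ
    (by simpa [Finset.Nonempty] using hx)
  rw [Finset.mem_filter_univ] at hjW
  have hfar : ∀ k, σ k < σ j → R + ε ≤ dist x (u k) := fun k hk =>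
    not_lt.1 fun hkW => (hjmin k ((Finset.mem_filter_univ _).2 hkW)).not_gt hk
  rcases le_or_gt (dist x (u j)) (R - ε) with hnear | hcut
  · refine Or.inl ⟨j, fun y hy => ⟨?_, ?_⟩⟩
    · rw [mem_ball] at hy ⊢
      linarith [dist_triangle y x (u j)]
    · simp only [mem_iUnion, mem_ball, not_exists]
      intro k hk hyk
      rw [mem_ball] at hy
      linarith [dist_triangle x y (u k), dist_comm x y, hfar k hk]
  · refine Or.inr ⟨j, ⟨hcut, hjW⟩, fun k hk hkj => ?_⟩
    exact (hjmin k ((Finset.mem_filter_univ _).2 (hk.trans_lt hjW))).lt_of_ne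
      (σ.injective.ne hkj.symm)

lemma sum_measure_inter_carvBlock_le (𝒟 : Measure (Euc d)) (B : Set (Euc d)) :
    ∑ i, 𝒟 (carvBlock u R σ i ∩ B) ≤ 𝒟 B := by
  simp_rw [← Measure.restrict_apply (measurableSet_carvBlock u R σ _)]
  calc ∑ i, 𝒟.restrict B (carvBlock u R σ i) ≤ 𝒟.restrict B univ :=
        sum_measure_le_measure_univ (fun i _ => (measurableSet_carvBlock u R σ i).nullMeasurableSet)
          fun i _ j _ hij => (pairwise_disjoint_carvBlock u R σ hij).aedisjoint
    _ = 𝒟 B := by rw [Measure.restrict_apply_univ]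

end Carving

section Smoothing

variable {d n : ℕ} (𝒟 : Measure (Euc d)) [IsFiniteMeasure 𝒟] {h f : Euc d → ℝ}
  (hh : ∀ x, h x = 1 ∨ h x = -1) (hf : IsClassifier f) (u : Fin n → Euc d) {R : ℝ}
  (σ : Equiv.Perm (Fin n)) {E : Set (Euc d)}
  (hE : ENNReal.ofReal (2 * R) ≤ setEDist (h ⁻¹' {-1} \ E) (h ⁻¹' {1} \ E))
include hh hf hE

lemma sum_measure_carvBlock_smoothVal_ne_le :
    ∑ i, 𝒟 (carvBlock u R σ i ∩ {y | smoothVal 𝒟 f (carvBlock u R σ i) ≠ h y}) ≤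
      2 * 𝒟 E + 2 * risk 𝒟 h f := by
  have hblock : ∀ i, 𝒟 (carvBlock u R σ i ∩ {y | smoothVal 𝒟 f (carvBlock u R σ i) ≠ h y}) ≤
      2 * 𝒟 (carvBlock u R σ i ∩ E) + 2 * 𝒟 (carvBlock u R σ i ∩ {y | f y ≠ h y}) := by
    intro i
    have hdiam : ∀ y ∈ carvBlock u R σ i, ∀ z ∈ carvBlock u R σ i, dist y z < 2 * R :=
      fun y hy z hz => by
        linarith [dist_triangle_right y z (u i), mem_ball.1 hy.1, mem_ball.1 hz.1]
    obtain ⟨v, hv, hvE⟩ := exists_eq_on_sdiff_of_le_setEDist hh hE hdiam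
    exact measure_smoothVal_ne_le 𝒟 hf (measurableSet_carvBlock u R σ i) E hv hvE
  calc _ ≤ ∑ i, (2 * 𝒟 (carvBlock u R σ i ∩ E) + 2 * 𝒟 (carvBlock u R σ i ∩ {y | f y ≠ h y})) :=
        Finset.sum_le_sum fun i _ => hblock i
    _ = 2 * ∑ i, 𝒟 (carvBlock u R σ i ∩ E) +
          2 * ∑ i, 𝒟 (carvBlock u R σ i ∩ {y | f y ≠ h y}) := by
        rw [Finset.sum_add_distrib, Finset.mul_sum, Finset.mul_sum]
    _ ≤ 2 * 𝒟 E + 2 * risk 𝒟 h f := by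
        gcongr
        exacts [sum_measure_inter_carvBlock_le u R σ 𝒟 E,
          sum_measure_inter_carvBlock_le u R σ 𝒟 _]

lemma advRisk_le_sum_isCut_add {ε : ℝ} (hε : 0 < ε) (hcov : msupport 𝒟 ⊆ ⋃ i, ball (u i) R)
    {g : Euc d → ℝ} (hg : ∀ x i, x ∈ carvBlock u R σ i → 𝒟 (carvBlock u R σ i) ≠ 0 →
      g x = smoothVal 𝒟 f (carvBlock u R σ i)) :
    advRisk 𝒟 h g ε ≤ ∑ j, 𝒟 {x | IsCut u R σ ε x j} + (2 * 𝒟 E + 2 * risk 𝒟 h f) := by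
  set N := (msupport 𝒟)ᶜ ∪ ⋃ i ∈ {i | 𝒟 (carvBlock u R σ i) = 0}, carvBlock u R σ i
  have hN : 𝒟 N = 0 := measure_union_null (measure_compl_msupport 𝒟)
    ((measure_biUnion_null_iff (to_countable _)).2 fun _ hi => hi)
  have hsub : {x | ∃ η : Euc d, ‖η‖ < ε ∧ g (x + η) ≠ h x} ⊆ N ∪ ((⋃ j, {x | IsCut u R σ ε x j}) ∪
      ⋃ i, carvBlock u R σ i ∩ {y | smoothVal 𝒟 f (carvBlock u R σ i) ≠ h y}) := by
    rintro x ⟨η, hη, hgη⟩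
    by_cases hxs : x ∈ msupport 𝒟
    swap
    · exact Or.inl (Or.inl hxs)
    obtain ⟨i₀, hi₀⟩ := mem_iUnion.1 (hcov hxs)
    rcases ball_subset_carvBlock_or_isCut u R σ (ε := ε) ⟨i₀, by linarith [mem_ball.1 hi₀]⟩ with
      ⟨i, hball⟩ | ⟨j, hj⟩
    · have hxi : x ∈ carvBlock u R σ i := hball (mem_ball_self hε)
      by_cases h0 : 𝒟 (carvBlock u R σ i) = 0
      · exact Or.inl (Or.inr (mem_biUnion (show i ∈ {i | 𝒟 (carvBlock u R σ i) = 0} from h0) hxi))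
      · have hxη : x + η ∈ ball x ε := by simpa [mem_ball, dist_eq_norm] using hη
        rw [hg _ i (hball hxη) h0] at hgη
        exact Or.inr (Or.inr (mem_iUnion.2 ⟨i, hxi, hgη⟩))
    · exact Or.inr (Or.inl (mem_iUnion.2 ⟨j, hj⟩))
  calc advRisk 𝒟 h g ε ≤ 𝒟 N + 𝒟 ((⋃ j, {x | IsCut u R σ ε x j}) ∪
        ⋃ i, carvBlock u R σ i ∩ {y | smoothVal 𝒟 f (carvBlock u R σ i) ≠ h y}) :=
        (measure_mono hsub).trans (measure_union_le _ _)
    _ ≤ ∑ j, 𝒟 {x | IsCut u R σ ε x j} + (2 * 𝒟 E + 2 * risk 𝒟 h f) := by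
        rw [hN, zero_add]
        refine (measure_union_le _ _).trans (add_le_add (measure_iUnion_fintype_le _ _) ?_)
        exact (measure_iUnion_fintype_le _ _).trans
          (sum_measure_carvBlock_smoothVal_ne_le 𝒟 hh hf u σ hE)

end Smoothing

section CutProbability

variable {d n : ℕ} (u : Fin n → Euc d) {ε : ℝ} (x : Euc d)

lemma setOf_isCut_eq_prod (j : Fin n) :
    {p : ℝ × Equiv.Perm (Fin n) | IsCut u p.1 p.2 ε x j} =
      Ioo (dist x (u j) - ε) (dist x (u j) + ε) ×ˢ
        {σ | ∀ k ∈ ({k | dist x (u k) ≤ dist x (u j)} : Finset (Fin n)), k ≠ j → σ j < σ k} := by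
  ext ⟨R, σ⟩
  simp only [IsCut, mem_ofPred_eq, mem_prod, mem_Ioo, Finset.mem_filter_univ]
  constructor <;> rintro ⟨⟨h₁, h₂⟩, h₃⟩ <;> exact ⟨⟨by linarith, by linarith⟩, h₃⟩

lemma carvMeasure_isCut_le {δ : ℝ} (hδ : 0 < δ) (j : Fin n) :
    carvMeasure δ n {p | IsCut u p.1 p.2 ε x j} ≤
      ENNReal.ofReal (8 * ε / δ / #{k | dist x (u k) ≤ dist x (u j)}) := by
  have hcard : (0 : ℝ) < #{k | dist x (u k) ≤ dist x (u j)} :=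
    Nat.cast_pos.2 (Finset.card_pos.2 ⟨j, Finset.mem_filter_univ _ |>.2 le_rfl⟩)
  calc carvMeasure δ n {p | IsCut u p.1 p.2 ε x j}
      = unifIoc (δ / 4) (δ / 2) (Ioo (dist x (u j) - ε) (dist x (u j) + ε)) *
          unifPerm n {σ | ∀ k ∈ ({k | dist x (u k) ≤ dist x (u j)} : Finset (Fin n)),
            k ≠ j → σ j < σ k} := by
        rw [carvMeasure, setOf_isCut_eq_prod, Measure.prod_prod]
    _ ≤ ENNReal.ofReal (8 * ε / δ) * (#{k | dist x (u k) ≤ dist x (u j)} : ℝ≥0∞)⁻¹ := by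
        gcongr
        · exact (unifIoc_Ioo_le (by linarith) _ _).trans_eq (by congr 1; field_simp; ring)
        · exact unifPerm_isLeast_le _ j
    _ = ENNReal.ofReal (8 * ε / δ / #{k | dist x (u k) ≤ dist x (u j)}) := by
        rw [ENNReal.ofReal_div_of_pos hcard, ENNReal.ofReal_natCast, ← div_eq_mul_inv]

lemma carvMeasure_isCut_eq_zero {δ : ℝ} {j : Fin n} (hj : δ / 2 + ε ≤ dist x (u j)) :
    carvMeasure δ n {p | IsCut u p.1 p.2 ε x j} = 0 := by
  rw [carvMeasure, setOf_isCut_eq_prod, Measure.prod_prod, unifIoc_Ioo_eq_zero (by linarith),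
    zero_mul]

lemma card_dist_lt_le_pow (hd : 1 ≤ d) (hε : 0 < ε) {β : ℝ} (hβ : 1 < β)
    (hsep : ∀ i j, i ≠ j → ε * β / 4 ≤ dist (u i) (u j)) :
    #{j | dist x (u j) < ε * β / 2 + ε} ≤ 13 ^ d := by
  have : Nonempty (Fin d) := ⟨⟨0, hd⟩⟩
  have hεβ : 0 < ε * β := mul_pos hε (by linarith)
  have hcard := card_le_of_isSeparated (by positivity : 0 < ε * β / 4) (by positivity)
    ({j | dist x (u j) < ε * β / 2 + ε} : Finset (Fin n)) (fun i _ j _ hij => hsep i j hij)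
    fun j hj => (Finset.mem_filter.1 hj).2
  have hbase : (2 * (ε * β / 2 + ε) + ε * β / 4) / (ε * β / 4) ≤ 13 := by
    rw [div_le_iff₀ (by positivity)]
    nlinarith
  rw [finrank_euclideanSpace_fin] at hcard
  exact_mod_cast hcard.trans (pow_le_pow_left₀ (by positivity) hbase d)

lemma sum_carvMeasure_isCut_le (hd : 1 ≤ d) (hε : 0 < ε) {β : ℝ} (hβ : 1 < β)
    (hsep : ∀ i j, i ≠ j → ε * β / 4 ≤ dist (u i) (u j)) :
    ∑ j, carvMeasure (ε * β) n {p | IsCut u p.1 p.2 ε x j} ≤ ENNReal.ofReal (104 * d / β) := by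
  have hβ0 : 0 < β := by linarith
  set T : Finset (Fin n) := {j | dist x (u j) < ε * β / 2 + ε}
  have hfilter : ∀ j ∈ T, (0 : ℝ) < #{k ∈ T | dist x (u k) ≤ dist x (u j)} := fun j hj =>
    Nat.cast_pos.2 (Finset.card_pos.2 ⟨j, Finset.mem_filter.2 ⟨hj, le_rfl⟩⟩)
  calc ∑ j, carvMeasure (ε * β) n {p | IsCut u p.1 p.2 ε x j}
      = ∑ j ∈ T, carvMeasure (ε * β) n {p | IsCut u p.1 p.2 ε x j} :=
        (Finset.sum_subset (Finset.subset_univ T) fun j _ hj => carvMeasure_isCut_eq_zero u x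
          (not_lt.1 fun h => hj ((Finset.mem_filter_univ _).2 h))).symm
    _ ≤ ∑ j ∈ T, ENNReal.ofReal (8 / β * (#{k ∈ T | dist x (u k) ≤ dist x (u j)} : ℝ)⁻¹) := by
        refine Finset.sum_le_sum fun j hj => (carvMeasure_isCut_le u x (mul_pos hε hβ0) j).trans
          (ENNReal.ofReal_le_ofReal ?_)
        rw [← div_eq_mul_inv, show 8 * ε / (ε * β) = 8 / β by field_simp]
        exact div_le_div_of_nonneg_left (by positivity) (hfilter j hj)
          (Nat.cast_le.2 (Finset.card_le_card
            (Finset.filter_subset_filter _ (Finset.subset_univ T))))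
    _ = ENNReal.ofReal (8 / β * ∑ j ∈ T, (#{k ∈ T | dist x (u k) ≤ dist x (u j)} : ℝ)⁻¹) := by
        rw [Finset.mul_sum, ENNReal.ofReal_sum_of_nonneg fun j hj => by positivity]
    _ ≤ ENNReal.ofReal (8 / β * (13 * d)) := by
        gcongr
        exact (sum_inv_card_filter_le_harmonic T _).trans (by
          exact_mod_cast harmonic_le_mul_of_le_pow hd (card_dist_lt_le_pow u x hd hε hβ hsep))
    _ = ENNReal.ofReal (104 * d / β) := by ring_nf

end CutProbability

lemma measurableSet_isCut {d n : ℕ} (u : Fin n → Euc d) (ε : ℝ) (j : Fin n) :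
    MeasurableSet {q : (ℝ × Equiv.Perm (Fin n)) × Euc d | IsCut u q.1.1 q.1.2 ε q.2 j} := by
  have hσ : ∀ k, Measurable fun q : (ℝ × Equiv.Perm (Fin n)) × Euc d => q.1.2 j < q.1.2 k :=
    fun k => (Measurable.of_discrete (f := fun σ : Equiv.Perm (Fin n) => σ j < σ k)).comp
      measurable_fst.snd
  simp only [IsCut, mem_Ioo, measurableSet_setOfPred]
  fun_prop

lemma isProbabilityMeasure_carvMeasure {δ : ℝ} (hδ : 0 < δ) (n : ℕ) :
    IsProbabilityMeasure (carvMeasure δ n) := by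
  have := isProbabilityMeasure_unifIoc (by linarith : δ / 4 < δ / 2)
  rw [carvMeasure, unifPerm_eq_uniformOn]
  infer_instance

lemma ae_carvMeasure_mem_Ioc (δ : ℝ) (n : ℕ) :
    ∀ᵐ p ∂carvMeasure δ n, p.1 ∈ Ioc (δ / 4) (δ / 2) := by
  rw [ae_iff, show {p : ℝ × Equiv.Perm (Fin n) | p.1 ∉ Ioc (δ / 4) (δ / 2)} =
    (Ioc (δ / 4) (δ / 2))ᶜ ×ˢ univ by ext; simp, carvMeasure, Measure.prod_prod,
    unifIoc_apply, compl_inter_self, measure_empty, mul_zero, zero_mul]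

lemma le_two_mul_sep_add {d : ℕ} (𝒟 : Measure (Euc d)) (h : Euc d → ℝ) (δ : ℝ) {a c : ℝ≥0∞}
    (H : ∀ E, MeasurableSet E → ENNReal.ofReal δ ≤ setEDist (h ⁻¹' {-1} \ E) (h ⁻¹' {1} \ E) →
      a ≤ 2 * 𝒟 E + c) :
    a ≤ 2 * sep 𝒟 h δ + c := by
  simp only [sep, ENNReal.mul_iInf_of_ne two_ne_zero ENNReal.ofNat_ne_top, ENNReal.iInf_add]
  exact le_iInf fun E => le_iInf fun hE => le_iInf fun hsep => H E hE hsep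

section Averaging

variable {d n : ℕ} (hd : 1 ≤ d) (𝒟 : Measure (Euc d)) [IsProbabilityMeasure 𝒟]
  {ε β : ℝ} (hε : 0 < ε) (hβ : 1 < β) (u : Fin n → Euc d)
  (hsep : ∀ i j, i ≠ j → ε * β / 4 ≤ dist (u i) (u j))
include hd hε hβ hsep

lemma lintegral_sum_measure_isCut_le :
    ∫⁻ p, ∑ j, 𝒟 {x | IsCut u p.1 p.2 ε x j} ∂carvMeasure (ε * β) n ≤
      ENNReal.ofReal (104 * d / β) := by
  have := isProbabilityMeasure_carvMeasure (mul_pos hε (by linarith : (0 : ℝ) < β)) n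
  calc ∫⁻ p, ∑ j, 𝒟 {x | IsCut u p.1 p.2 ε x j} ∂carvMeasure (ε * β) n
      = ∫⁻ x, ∑ j, carvMeasure (ε * β) n {p | IsCut u p.1 p.2 ε x j} ∂𝒟 := by
        have hcut := measurableSet_isCut u ε
        rw [lintegral_finsetSum
            (f := fun j (p : ℝ × Equiv.Perm (Fin n)) => 𝒟 {x | IsCut u p.1 p.2 ε x j}) _
            fun j _ => measurable_measure_prodMk_left (hcut j),
          lintegral_finsetSum (f := fun j x => carvMeasure (ε * β) n {p | IsCut u p.1 p.2 ε x j}) _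
            fun j _ => measurable_measure_prodMk_right (hcut j)]
        exact Finset.sum_congr rfl fun j _ =>
          (Measure.prod_apply (hcut j)).symm.trans (Measure.prod_apply_symm (hcut j))
    _ ≤ ∫⁻ _, ENNReal.ofReal (104 * d / β) ∂𝒟 :=
        lintegral_mono fun x => sum_carvMeasure_isCut_le u x hd hε hβ hsep
    _ = ENNReal.ofReal (104 * d / β) := by rw [lintegral_const, measure_univ, mul_one]

lemma lintegral_advRisk_le {h f : Euc d → ℝ} (hh : ∀ x, h x = 1 ∨ h x = -1) (hf : IsClassifier f)
    (hcov : msupport 𝒟 ⊆ ⋃ i, ball (u i) (ε * β / 4))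
    {g : ℝ → Equiv.Perm (Fin n) → Euc d → ℝ}
    (hg : ∀ R σ x i, x ∈ carvBlock u R σ i → 𝒟 (carvBlock u R σ i) ≠ 0 →
      g R σ x = smoothVal 𝒟 f (carvBlock u R σ i))
    {E : Set (Euc d)} (hE : ENNReal.ofReal (ε * β) ≤ setEDist (h ⁻¹' {-1} \ E) (h ⁻¹' {1} \ E)) :
    ∫⁻ p, advRisk 𝒟 h (g p.1 p.2) ε ∂carvMeasure (ε * β) n ≤
      2 * 𝒟 E + 2 * risk 𝒟 h f + ENNReal.ofReal (104 * d / β) := by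
  have := isProbabilityMeasure_carvMeasure (mul_pos hε (by linarith : (0 : ℝ) < β)) n
  have hpoint : ∀ᵐ p ∂carvMeasure (ε * β) n, advRisk 𝒟 h (g p.1 p.2) ε ≤
      ∑ j, 𝒟 {x | IsCut u p.1 p.2 ε x j} + (2 * 𝒟 E + 2 * risk 𝒟 h f) := by
    filter_upwards [ae_carvMeasure_mem_Ioc (ε * β) n] with p hp
    refine advRisk_le_sum_isCut_add 𝒟 hh hf u p.2
      ((ENNReal.ofReal_le_ofReal (by linarith [hp.2])).trans hE) hε
      (hcov.trans (iUnion_mono fun i => ball_subset_ball hp.1.le)) (hg p.1 p.2)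
  calc ∫⁻ p, advRisk 𝒟 h (g p.1 p.2) ε ∂carvMeasure (ε * β) n
      ≤ ∫⁻ p, ∑ j, 𝒟 {x | IsCut u p.1 p.2 ε x j} ∂carvMeasure (ε * β) n +
          (2 * 𝒟 E + 2 * risk 𝒟 h f) :=
        (lintegral_mono_ae hpoint).trans_eq (by
          rw [lintegral_add_right _ measurable_const, lintegral_const, measure_univ, mul_one])
    _ ≤ 2 * 𝒟 E + 2 * risk 𝒟 h f + ENNReal.ofReal (104 * d / β) := by
        rw [add_comm]
        gcongr
        exact lintegral_sum_measure_isCut_le hd 𝒟 hε hβ u hsep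

end Averaging

/-- Theorem 2 (ball carving partitions): there is a universal constant `C > 0`
such that the following holds.  Let `(𝒟, h)` be a separable binary
classification task on `ℝ^d` (`d ≥ 1`) with `supp(𝒟)` bounded, `f` a measurable
classifier, `ε > 0`, `β > 1`, and let `g_{R,σ}` be the smoothed classifier
obtained from the ball carving partition of `supp(𝒟)` with parameter `εβ`
(built from a finite `εβ/4`-net `u : Fin n → ℝ^d` of `supp(𝒟)`).  Then
`𝔼_{R,σ}[AR(g, ε)] ≤ 2·S(εβ) + 2·R(f) + C·d/β`, and moreover, if `AR(ε) > 0`,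
then `𝔼_{R,σ}[AR(g, ε)] ≤ (2·S(εβ)/S(2ε))·AR(ε) + 2·R(f) + C·d/β`. -/
theorem stmt14 : ∃ C : ℝ, 0 < C ∧
    ∀ (d n : ℕ), 1 ≤ d →
    ∀ (𝒟 : Measure (Euc d)), IsProbabilityMeasure 𝒟 →
    Bornology.IsBounded (msupport 𝒟) →
    ∀ h : Euc d → ℝ, IsClassifier h →
    ∀ f : Euc d → ℝ, IsClassifier f →
    ∀ (ε β : ℝ), 0 < ε → 1 < β →
    -- `u` is a finite `εβ/4`-net of `supp(𝒟)`
    ∀ u : Fin n → Euc d, (∀ i, u i ∈ msupport 𝒟) →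
    (∀ i j, i ≠ j → ε * β / 4 ≤ dist (u i) (u j)) →
    msupport 𝒟 ⊆ (⋃ i, ball (u i) (ε * β / 4)) →
    -- the smoothed classifiers
    ∀ g : ℝ → Equiv.Perm (Fin n) → Euc d → ℝ,
    (∀ R σ, IsClassifier (g R σ)) →
    (∀ (R : ℝ) (σ : Equiv.Perm (Fin n)) (x : Euc d) (i : Fin n),
      x ∈ carvBlock u R σ i → 𝒟 (carvBlock u R σ i) ≠ 0 →
      g R σ x = smoothVal 𝒟 f (carvBlock u R σ i)) →
    ((∫⁻ p, advRisk 𝒟 h (g p.1 p.2) ε ∂(carvMeasure (ε * β) n)) ≤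
        2 * sep 𝒟 h (ε * β) + 2 * risk 𝒟 h f + ENNReal.ofReal (C * d / β) ∧
      (0 < optAdvRisk 𝒟 h ε →
        (∫⁻ p, advRisk 𝒟 h (g p.1 p.2) ε ∂(carvMeasure (ε * β) n)) ≤
          2 * sep 𝒟 h (ε * β) / sep 𝒟 h (2 * ε) * optAdvRisk 𝒟 h ε +
            2 * risk 𝒟 h f + ENNReal.ofReal (C * d / β))) := by
  refine ⟨104, by norm_num, fun d n hd 𝒟 _ _ h hh f hf ε β hε hβ u _ hsep hcov g _ hg => ?_⟩
  have hbound : ∫⁻ p, advRisk 𝒟 h (g p.1 p.2) ε ∂carvMeasure (ε * β) n ≤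
      2 * sep 𝒟 h (ε * β) + 2 * risk 𝒟 h f + ENNReal.ofReal (104 * d / β) := by
    rw [add_assoc]
    exact le_two_mul_sep_add 𝒟 h (ε * β) fun E _ hE =>
      (lintegral_advRisk_le hd 𝒟 hε hβ u hsep hh.2 hf hcov hg hE).trans_eq (add_assoc _ _ _)
  refine ⟨hbound, fun hopt => hbound.trans ?_⟩
  gcongr ?_ + _ + _
  exact ENNReal.le_div_mul_of_le (sep_two_mul_le_optAdvRisk 𝒟 h ε) (sep_ne_top 𝒟 h _) hopt.ne'
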